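/- Let k be a field of characteristic zero and R = k⟨x,y⟩/(xy − yx − y²). For each n ≥ 1 let ε_n : R → M_n(k) be the unique k-algebra homomorphism with ε_n(x) = X⁰ and ε_n(y) = J_n (well defined since X⁰*J_n − J_n*X⁰ = J_n^2). Then the intersection over all n of the kernels of ε_n is zero: for every nonzero f ∈ R there exists n with ε_n(f) ≠ 0. In particular, R is residually finite dimensional. -/

import Mathlib

/-- The defining relation `x*y = y*x + y*y` of the Jordanian algebra
`R = k⟨x,y⟩/(xy - yx - y²)`, as a relation on the free algebra on two generators. -/
inductive JordanRel (k : Type) [Field k] :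
    FreeAlgebra k (Fin 2) → FreeAlgebra k (Fin 2) → Prop
  | rel : JordanRel k (FreeAlgebra.ι k 0 * FreeAlgebra.ι k 1)
      (FreeAlgebra.ι k 1 * FreeAlgebra.ι k 0 + FreeAlgebra.ι k 1 * FreeAlgebra.ι k 1)

/-- The Jordanian algebra `R = k⟨x,y⟩/(xy - yx - y²)`. -/
abbrev Jordanian (k : Type) [Field k] := RingQuot (JordanRel k)

/-- The image of the generator `x` in the Jordanian algebra. -/
noncomputable def Jordanian.x (k : Type) [Field k] : Jordanian k :=
  RingQuot.mkAlgHom k (JordanRel k) (FreeAlgebra.ι k 0)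

/-- The image of the generator `y` in the Jordanian algebra. -/
noncomputable def Jordanian.y (k : Type) [Field k] : Jordanian k :=
  RingQuot.mkAlgHom k (JordanRel k) (FreeAlgebra.ι k 1)

/-- The `n × n` nilpotent Jordan block with ones on the subdiagonal:
`(J_n)_{i,j} = 1` iff `i = j + 1`. -/
def jordanBlock (k : Type) [Field k] (n : ℕ) : Matrix (Fin n) (Fin n) k :=
  Matrix.of fun i j => if (i : ℕ) = (j : ℕ) + 1 then 1 else 0

/-- The matrix `X⁰` whose only nonzero entries are `(X⁰)_{j+1,j} = j` for `j = 0,…,n-2`. -/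
def Xzero (k : Type) [Field k] (n : ℕ) : Matrix (Fin n) (Fin n) k :=
  Matrix.of fun i j => if (i : ℕ) = (j : ℕ) + 1 then ((j : ℕ) : k) else 0

/-!
The relation gives `x * y ^ i = y ^ i * x + i • y ^ (i + 1)`, so the monomials `y ^ i * x ^ j` span
`R`. Both `X⁰` and `J_n` live on the first subdiagonal, and `J_n ^ i * X⁰ ^ j` lives on the
`(i + j)`-th one, with entry the rising factorial `b (b + 1) ⋯ (b + j - 1)` in column `b`. So
if `f = ∑ c_{ij} y ^ i x ^ j` with `c_{ij} ≠ 0` and `i + j = d`, the `(m + d, m)` entry of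
`ε_{m+d+1} f` is `P(m)` for `P = ∑_{i+j=d} c_{ij} X (X + 1) ⋯ (X + j - 1)`. The rising
factorials are linearly independent, so `P ≠ 0`, and in characteristic zero `P` cannot vanish at
every natural number.
-/

open Polynomial

section ShiftMatrix

variable {R : Type*} [Semiring R]

def shiftMatrix (n d : ℕ) (c : ℕ → R) : Matrix (Fin n) (Fin n) R :=
  Matrix.of fun a b => if (a : ℕ) = b + d then c b else 0

theorem shiftMatrix_apply (n d : ℕ) (c : ℕ → R) (a b : Fin n) :
    shiftMatrix n d c a b = if (a : ℕ) = b + d then c b else 0 := rfl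

theorem shiftMatrix_congr (n d : ℕ) {c c' : ℕ → R} (h : ∀ b < n, c b = c' b) :
    shiftMatrix n d c = shiftMatrix n d c' := by
  ext a b
  simp only [shiftMatrix_apply, h b b.isLt]

theorem shiftMatrix_zero_one (n : ℕ) : shiftMatrix n 0 (fun _ => (1 : R)) = 1 := by
  ext a b
  simp [shiftMatrix_apply, Matrix.one_apply, Fin.ext_iff]

theorem shiftMatrix_mul (n d e : ℕ) (c c' : ℕ → R) :
    shiftMatrix n d c * shiftMatrix n e c' =
      shiftMatrix n (d + e) (fun b => c (b + e) * c' b) := by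
  ext a b
  simp only [Matrix.mul_apply, shiftMatrix_apply]
  by_cases hb : (b : ℕ) + e < n
  · rw [Finset.sum_eq_single ⟨b + e, hb⟩ (fun x _ hx => by simp [Fin.ext_iff.not.mp hx])
      (by simp)]
    by_cases ha : (a : ℕ) = b + (d + e)
    · simp [ha, add_assoc, add_comm d e]
    · simp [show (a : ℕ) ≠ b + e + d by omega, ha]
  · rw [Finset.sum_eq_zero fun x _ => by simp [show (x : ℕ) ≠ b + e by omega],
      if_neg (by omega)]

end ShiftMatrix

section Matrices

variable {k : Type} [Field k]

theorem jordanBlock_eq_shiftMatrix (n : ℕ) : jordanBlock k n = shiftMatrix n 1 (fun _ => 1) :=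
  rfl

theorem Xzero_eq_shiftMatrix (n : ℕ) : Xzero k n = shiftMatrix n 1 (fun b => (b : k)) := rfl

theorem jordanBlock_pow (n i : ℕ) : jordanBlock k n ^ i = shiftMatrix n i (fun _ => 1) := by
  induction i with
  | zero => rw [pow_zero, shiftMatrix_zero_one]
  | succ i ih =>
    rw [pow_succ, ih, jordanBlock_eq_shiftMatrix, shiftMatrix_mul]
    simp only [mul_one]

theorem Xzero_pow (n j : ℕ) :
    Xzero k n ^ j = shiftMatrix n j (fun b => (ascPochhammer k j).eval (b : k)) := by
  induction j with
  | zero => simp [← shiftMatrix_zero_one]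
  | succ j ih =>
    rw [pow_succ', ih, Xzero_eq_shiftMatrix, shiftMatrix_mul, add_comm 1 j]
    refine shiftMatrix_congr n _ fun b _ => ?_
    rw [ascPochhammer_succ_right, eval_mul]
    simp [mul_comm]

theorem Xzero_mul_jordanBlock (n : ℕ) :
    Xzero k n * jordanBlock k n =
      jordanBlock k n * Xzero k n + jordanBlock k n * jordanBlock k n := by
  simp only [Xzero_eq_shiftMatrix, jordanBlock_eq_shiftMatrix, shiftMatrix_mul]
  ext a b
  simp only [shiftMatrix_apply, Matrix.add_apply]
  split_ifs <;> push_cast <;> ring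

end Matrices

section Pochhammer

variable {R : Type*}

noncomputable def ascPochhammerSequence (R : Type*) [Semiring R] [Nontrivial R]
    [NoZeroDivisors R] : Polynomial.Sequence R where
  elems' := ascPochhammer R
  degree_eq' j := by
    rw [degree_eq_natDegree (monic_ascPochhammer R j).ne_zero, ascPochhammer_natDegree]

noncomputable def antidiagonalPochhammer [Semiring R] (c : ℕ × ℕ →₀ R) (d : ℕ) : R[X] :=
  ∑ p ∈ c.support with p.1 + p.2 = d, c p • ascPochhammer R p.2

theorem antidiagonalPochhammer_ne_zero [Ring R] [IsDomain R] {c : ℕ × ℕ →₀ R} {p : ℕ × ℕ}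
    (hp : c p ≠ 0) : antidiagonalPochhammer c (p.1 + p.2) ≠ 0 := by
  set d := p.1 + p.2
  set S := {q ∈ c.support | q.1 + q.2 = d}
  have hfst : ∀ q ∈ S, d - q.2 = q.1 := fun q hq => by
    rw [← (Finset.mem_filter.mp hq).2, Nat.add_sub_cancel]
  have hsnd_injOn : Set.InjOn Prod.snd (S : Set (ℕ × ℕ)) := fun q hq q' hq' h =>
    Prod.ext (by rw [← hfst q hq, ← hfst q' hq', h]) h
  have hsum : ∑ j ∈ S.image Prod.snd, c (d - j, j) • ascPochhammerSequence R j =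
      antidiagonalPochhammer c d := by
    rw [Finset.sum_image hsnd_injOn]
    exact Finset.sum_congr rfl fun q hq => by rw [hfst q hq]; rfl
  intro h
  have hpS : p ∈ S := Finset.mem_filter.mpr ⟨Finsupp.mem_support_iff.mpr hp, rfl⟩
  have hcoeff := linearIndependent_iff'.mp (ascPochhammerSequence R).linearIndependent _ _
    (hsum.trans h) p.2 (Finset.mem_image_of_mem _ hpS)
  rw [hfst p hpS] at hcoeff
  exact hp hcoeff

theorem Polynomial.exists_eval_natCast_ne_zero [CommRing R] [IsDomain R] [CharZero R]
    {P : R[X]} (hP : P ≠ 0) : ∃ m : ℕ, P.eval (m : R) ≠ 0 := by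
  by_contra! h
  exact hP (P.eq_zero_of_infinite_isRoot
    ((Set.infinite_range_of_injective Nat.cast_injective).mono (Set.range_subset_iff.mpr h)))

end Pochhammer

namespace Jordanian

variable (k : Type) [Field k]

theorem x_mul_y : x k * y k = y k * x k + y k * y k := by
  simpa only [x, y, map_mul, map_add] using RingQuot.mkAlgHom_rel k (JordanRel.rel (k := k))

variable {k}

theorem x_mul_y_pow (i : ℕ) : x k * y k ^ i = y k ^ i * x k + (i : k) • y k ^ (i + 1) := by
  induction i with
  | zero => simp
  | succ i ih =>
    rw [pow_succ, ← mul_assoc, ih, add_mul, mul_assoc, x_mul_y, mul_add, smul_mul_assoc,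
      ← mul_assoc, ← mul_assoc, ← pow_succ, ← pow_succ, Nat.cast_succ, add_smul, one_smul]
    abel

noncomputable def lift {A : Type*} [Semiring A] [Algebra k A] (a b : A)
    (h : a * b = b * a + b * b) : Jordanian k →ₐ[k] A :=
  RingQuot.liftAlgHom k ⟨FreeAlgebra.lift k ![a, b], fun _ _ r => by cases r; simpa using h⟩

section Lift

variable {A : Type*} [Semiring A] [Algebra k A] {a b : A} (h : a * b = b * a + b * b)

@[simp] theorem lift_x : lift a b h (x k) = a := by
  simp [lift, x, RingQuot.liftAlgHom_mkAlgHom_apply]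

@[simp] theorem lift_y : lift a b h (y k) = b := by
  simp [lift, y, RingQuot.liftAlgHom_mkAlgHom_apply]

end Lift

variable (k)

noncomputable def monomial (p : ℕ × ℕ) : Jordanian k := y k ^ p.1 * x k ^ p.2

theorem span_range_monomial_eq_top : Submodule.span k (Set.range (monomial k)) = ⊤ := by
  set S := Submodule.span k (Set.range (monomial k))
  have mul_mem {a : Jordanian k} (ha : ∀ p, a * monomial k p ∈ S) {s : Jordanian k}
      (hs : s ∈ S) : a * s ∈ S :=
    (Submodule.span_le (p := S.comap (LinearMap.mulLeft k a))).mpr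
      (Set.range_subset_iff.mpr ha) hs
  have x_mul_mem : ∀ s ∈ S, x k * s ∈ S := fun _ => mul_mem fun ⟨i, j⟩ => by
    rw [monomial, ← mul_assoc, x_mul_y_pow, add_mul, mul_assoc, ← pow_succ', smul_mul_assoc]
    exact S.add_mem (Submodule.subset_span ⟨(i, j + 1), rfl⟩)
      (S.smul_mem _ (Submodule.subset_span ⟨(i + 1, j), rfl⟩))
  have y_mul_mem : ∀ s ∈ S, y k * s ∈ S := fun _ => mul_mem fun ⟨i, j⟩ => by
    rw [monomial, ← mul_assoc, ← pow_succ']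
    exact Submodule.subset_span ⟨(i + 1, j), rfl⟩
  have one_mem : 1 ∈ S := Submodule.subset_span ⟨(0, 0), by simp [monomial]⟩
  -- `S` is stable under left multiplication by the generators, hence by all of `R`;
  -- apply this to `f * 1`.
  refine Submodule.eq_top_iff'.mpr fun f => ?_
  obtain ⟨g, rfl⟩ := RingQuot.mkAlgHom_surjective k (JordanRel k) f
  suffices ∀ s ∈ S, RingQuot.mkAlgHom k (JordanRel k) g * s ∈ S by simpa using this 1 one_mem
  induction g using FreeAlgebra.induction with
  | grade0 r => simpa [Algebra.smul_def] using fun s hs => S.smul_mem r hs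
  | grade1 i => fin_cases i; exacts [x_mul_mem, y_mul_mem]
  | mul u v hu hv => exact fun s hs => by rw [map_mul, mul_assoc]; exact hu _ (hv s hs)
  | add u v hu hv =>
    exact fun s hs => by rw [map_add, add_mul]; exact S.add_mem (hu s hs) (hv s hs)

noncomputable def toMatrix (n : ℕ) : Jordanian k →ₐ[k] Matrix (Fin n) (Fin n) k :=
  lift (Xzero k n) (jordanBlock k n) (Xzero_mul_jordanBlock n)

variable {k}

theorem toMatrix_monomial (n : ℕ) (p : ℕ × ℕ) :
    toMatrix k n (monomial k p) =
      shiftMatrix n (p.1 + p.2) (fun b => (ascPochhammer k p.2).eval (b : k)) := by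
  rw [monomial, map_mul, map_pow, map_pow, toMatrix, lift_x, lift_y, jordanBlock_pow, Xzero_pow,
    shiftMatrix_mul]
  simp only [one_mul]

theorem toMatrix_linearCombination_apply (c : ℕ × ℕ →₀ k) (m d : ℕ) :
    toMatrix k (m + d + 1) (Finsupp.linearCombination k (monomial k) c) ⟨m + d, by omega⟩
      ⟨m, by omega⟩ = (antidiagonalPochhammer c d).eval (m : k) := by
  rw [Finsupp.linearCombination_apply, Finsupp.sum, map_sum, Matrix.sum_apply,
    antidiagonalPochhammer, eval_finsetSum, Finset.sum_filter]
  refine Finset.sum_congr rfl fun p _ => ?_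
  rw [map_smul, Matrix.smul_apply, toMatrix_monomial, shiftMatrix_apply]
  simp only [Nat.add_left_cancel_iff, eq_comm (a := d)]
  split_ifs <;> simp

end Jordanian

/-- Let `k` be a field of characteristic zero and
`R = k⟨x,y⟩/(xy - yx - y²)`.  For each `n ≥ 1` let `ε_n : R → M_n(k)` be the (unique)
`k`-algebra homomorphism with `ε_n(x) = X⁰` and `ε_n(y) = J_n`.  Then the intersection of the
kernels of the `ε_n` is zero: for every nonzero `f ∈ R` there exist `n ≥ 1` and such a
homomorphism `ε` with `ε f ≠ 0`.  In particular, `R` is residually finite dimensional. -/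
theorem jordanian_residually_finite_dimensional (k : Type) [Field k] [CharZero k]
    (f : Jordanian k) (hf : f ≠ 0) :
    ∃ n : ℕ, 1 ≤ n ∧ ∃ ε : Jordanian k →ₐ[k] Matrix (Fin n) (Fin n) k,
      ε (Jordanian.x k) = Xzero k n ∧ ε (Jordanian.y k) = jordanBlock k n ∧ ε f ≠ 0 := by
  obtain ⟨c, rfl⟩ : ∃ c, Finsupp.linearCombination k (Jordanian.monomial k) c = f :=
    LinearMap.range_eq_top.mp
      (by rw [Finsupp.range_linearCombination, Jordanian.span_range_monomial_eq_top]) f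
  obtain ⟨p, hp⟩ : ∃ p, c p ≠ 0 := by
    by_contra! hc
    exact hf (by rw [show c = 0 from Finsupp.ext hc, map_zero])
  obtain ⟨m, hm⟩ := exists_eval_natCast_ne_zero (antidiagonalPochhammer_ne_zero hp)
  refine ⟨m + (p.1 + p.2) + 1, by omega, Jordanian.toMatrix k _, Jordanian.lift_x _,
    Jordanian.lift_y _, fun h => hm ?_⟩
  rw [← Jordanian.toMatrix_linearCombination_apply, h, Matrix.zero_apply]
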